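/- Let K be a number field of degree n ≤ 3 over ℚ. Then log|d_K| ≠ r₁(K)·π/2 + n·(log(8π) + γ). (This is the key step of Theorem 2: the factor A_K'(1/2) = log|d_K| − r₁(K)·π/2 − n(log(8π)+γ) in the derivative of the functional equation of ζ_K at s = 1/2 is nonzero for all fields of degree at most 3, hence ζ_K(1/2) = 0 if and only if ζ_K'(1/2) = 0 for such fields.) -/
import Mathlib

open Real Finset Filter Topology

namespace DiscrAux


lemma log_one_sub_bounds {x : ℝ} (h0 : 0 ≤ x) (h1 : x < 1) (n : ℕ) :
    -(∑ i ∈ range n, x ^ (i + 1) / (i + 1)) - x ^ (n + 1) / (1 - x) ≤ Real.log (1 - x) ∧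
    Real.log (1 - x) ≤ -(∑ i ∈ range n, x ^ (i + 1) / (i + 1)) + x ^ (n + 1) / (1 - x) := by
  have h := Real.abs_log_sub_add_sum_range_le (by rwa [abs_of_nonneg h0]) n
  rw [abs_of_nonneg h0, abs_le] at h
  constructor <;> linarith [h.1, h.2]

lemma log_two_gt : (0.693147180559916 : ℝ) < Real.log 2 := by
  have h := (log_one_sub_bounds (x := 1/2) (by norm_num) (by norm_num) 45).2
  have h2 : Real.log (1 - 1/2 : ℝ) = -Real.log 2 := by
    rw [show (1 - 1/2 : ℝ) = 2⁻¹ by norm_num, Real.log_inv]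
  rw [h2] at h
  simp only [Finset.sum_range_succ, Finset.sum_range_zero] at h
  norm_num at h ⊢
  linarith

lemma log_two_lt : Real.log 2 < 0.693147180559974 := by
  have h := (log_one_sub_bounds (x := 1/2) (by norm_num) (by norm_num) 45).1
  have h2 : Real.log (1 - 1/2 : ℝ) = -Real.log 2 := by
    rw [show (1 - 1/2 : ℝ) = 2⁻¹ by norm_num, Real.log_inv]
  rw [h2] at h
  simp only [Finset.sum_range_succ, Finset.sum_range_zero] at h
  norm_num at h ⊢
  linarith

lemma log_lt_aux (k n : ℕ) {x c : ℝ} (h0 : 0 ≤ x) (h1 : x < 1)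
    (h : (k : ℝ) * 0.693147180559974 +
      (-(∑ i ∈ range n, x ^ (i + 1) / (i + 1)) + x ^ (n + 1) / (1 - x)) < c) :
    Real.log (2 ^ k * (1 - x)) < c := by
  rw [Real.log_mul (by positivity) (by linarith), Real.log_pow]
  have h2 := (log_one_sub_bounds h0 h1 n).1
  have h3 := (log_one_sub_bounds h0 h1 n).2
  have hk : (k : ℝ) * Real.log 2 ≤ (k : ℝ) * 0.693147180559974 :=
    mul_le_mul_of_nonneg_left log_two_lt.le (Nat.cast_nonneg k)
  linarith

lemma lt_log_aux (k n : ℕ) {x c : ℝ} (h0 : 0 ≤ x) (h1 : x < 1)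
    (h : c < (k : ℝ) * 0.693147180559916 +
      (-(∑ i ∈ range n, x ^ (i + 1) / (i + 1)) - x ^ (n + 1) / (1 - x))) :
    c < Real.log (2 ^ k * (1 - x)) := by
  rw [Real.log_mul (by positivity) (by linarith), Real.log_pow]
  have h2 := (log_one_sub_bounds h0 h1 n).1
  have hk : (k : ℝ) * 0.693147180559916 ≤ (k : ℝ) * Real.log 2 :=
    mul_le_mul_of_nonneg_left log_two_gt.le (Nat.cast_nonneg k)
  linarith

lemma log_25_lt : Real.log 25 < 3.218875824868732 := by
  rw [show (25:ℝ) = 2^5*(1 - 7/32) by norm_num]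
  apply log_lt_aux _ 18 (by norm_num) (by norm_num)
  simp only [Finset.sum_range_succ, Finset.sum_range_zero]
  norm_num

lemma log_25_gt : (3.218875824867705 : ℝ) < Real.log 25 := by
  rw [show (25:ℝ) = 2^5*(1 - 7/32) by norm_num]
  apply lt_log_aux _ 18 (by norm_num) (by norm_num)
  simp only [Finset.sum_range_succ, Finset.sum_range_zero]
  norm_num

lemma log_q1_gt : (1.144729885845982 : ℝ) < Real.log (157079632679/50000000000 : ℝ) := by
  rw [show ((157079632679/50000000000 : ℝ):ℝ) = 2^2*(1 - 42920367321/200000000000) by norm_num]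
  apply lt_log_aux _ 18 (by norm_num) (by norm_num)
  simp only [Finset.sum_range_succ, Finset.sum_range_zero]
  norm_num

lemma log_q2_lt : Real.log (314159265359/100000000000 : ℝ) < 1.144729885849792 := by
  rw [show ((314159265359/100000000000 : ℝ):ℝ) = 2^2*(1 - 85840734641/400000000000) by norm_num]
  apply log_lt_aux _ 18 (by norm_num) (by norm_num)
  simp only [Finset.sum_range_succ, Finset.sum_range_zero]
  norm_num

lemma log_215_lt : Real.log 215 < 5.370638028127931 := by
  rw [show (215:ℝ) = 2^8*(1 - 41/256) by norm_num]
  apply log_lt_aux _ 16 (by norm_num) (by norm_num)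
  simp only [Finset.sum_range_succ, Finset.sum_range_zero]
  norm_num

lemma log_216_gt : (5.375278407683908 : ℝ) < Real.log 216 := by
  rw [show (216:ℝ) = 2^8*(1 - 5/32) by norm_num]
  apply lt_log_aux _ 16 (by norm_num) (by norm_num)
  simp only [Finset.sum_range_succ, Finset.sum_range_zero]
  norm_num

lemma log_2003_lt : Real.log 2003 < 7.602401335666134 := by
  rw [show (2003:ℝ) = 2^11*(1 - 45/2048) by norm_num]
  apply log_lt_aux _ 10 (by norm_num) (by norm_num)
  simp only [Finset.sum_range_succ, Finset.sum_range_zero]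
  norm_num

lemma log_2004_gt : (7.602900462204433 : ℝ) < Real.log 2004 := by
  rw [show (2004:ℝ) = 2^11*(1 - 11/512) by norm_num]
  apply lt_log_aux _ 10 (by norm_num) (by norm_num)
  simp only [Finset.sum_range_succ, Finset.sum_range_zero]
  norm_num

lemma log_46368_lt : Real.log 46368 < 10.744364845120934 := by
  rw [show (46368:ℝ) = 2^16*(1 - 599/2048) by norm_num]
  apply log_lt_aux _ 24 (by norm_num) (by norm_num)
  simp only [Finset.sum_range_succ, Finset.sum_range_zero]
  norm_num

lemma log_46369_gt : (10.744386411484976 : ℝ) < Real.log 46369 := by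
  rw [show (46369:ℝ) = 2^16*(1 - 19167/65536) by norm_num]
  apply lt_log_aux _ 24 (by norm_num) (by norm_num)
  simp only [Finset.sum_range_succ, Finset.sum_range_zero]
  norm_num

lemma log_431471_lt : Real.log 431471 < 12.974955579831662 := by
  rw [show (431471:ℝ) = 2^19*(1 - 92817/524288) by norm_num]
  apply log_lt_aux _ 18 (by norm_num) (by norm_num)
  simp only [Finset.sum_range_succ, Finset.sum_range_zero]
  norm_num

lemma log_431472_gt : (12.974957897480727 : ℝ) < Real.log 431472 := by
  rw [show (431472:ℝ) = 2^19*(1 - 5801/32768) by norm_num]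
  apply lt_log_aux _ 18 (by norm_num) (by norm_num)
  simp only [Finset.sum_range_succ, Finset.sum_range_zero]
  norm_num

lemma log_9984558_lt : Real.log 9984558 < 16.116550257453361 := by
  rw [show (9984558:ℝ) = 2^24*(1 - 3396329/8388608) by norm_num]
  apply log_lt_aux _ 36 (by norm_num) (by norm_num)
  simp only [Finset.sum_range_succ, Finset.sum_range_zero]
  norm_num

lemma log_9984559_gt : (16.116550357606612 : ℝ) < Real.log 9984559 := by
  rw [show (9984559:ℝ) = 2^24*(1 - 6792657/16777216) by norm_num]
  apply lt_log_aux _ 36 (by norm_num) (by norm_num)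
  simp only [Finset.sum_range_succ, Finset.sum_range_zero]
  norm_num


noncomputable def Af (x : ℝ) : ℝ := 1/(2*x) - 1/(12*x^2) + 1/(120*x^4)
noncomputable def Bf (x : ℝ) : ℝ := Af x - 1/(250*x^6)

lemma step_up {x : ℝ} (hx : 25 ≤ x) :
    Real.log (1 + 1/x) - 1/(x+1) ≤ Af x - Af (x+1) := by
  have hx0 : (0:ℝ) < x := by linarith
  have hx1 : (0:ℝ) < x - 1 := by linarith
  have hx2 : (0:ℝ) < x + 1 := by linarith
  have habs : |(-(1/x))| = 1/x := by
    rw [abs_neg, abs_of_pos (by positivity)]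
  have h := Real.abs_log_sub_add_sum_range_le (x := -(1/x))
    (by rw [habs, div_lt_one hx0]; linarith) 10
  rw [habs, abs_le, show (1 : ℝ) - -(1/x) = 1 + 1/x by ring] at h
  have hlog : Real.log (1 + 1/x) ≤
      -(∑ i ∈ range 10, (-(1/x)) ^ (i+1) / (i+1)) + (1/x)^11/(1-1/x) := by
    linarith [h.2]
  have hinv : (1:ℝ) - 1/x ≠ 0 := by
    have : 1/x < 1 := by rw [div_lt_one hx0]; linarith
    linarith
  have key : Af x - Af (x+1) + 1/(x+1)
      + (∑ i ∈ range 10, (-(1/x)) ^ (i+1) / (i+1)) - (1/x)^11/(1-1/x)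
      = (2987623322776/7 + (2876275357619/21)*(x-25) + (134598762442/7)*(x-25)^2
        + (4627359607/3)*(x-25)^3 + (1623898456/21)*(x-25)^4 + (17367052/7)*(x-25)^5
        + (1044716/21)*(x-25)^6 + 570*(x-25)^7 + (20/7)*(x-25)^8)
        / (120 * x^10 * (x-1) * (x+1)^4) := by
    simp only [Finset.sum_range_succ, Finset.sum_range_zero, Af]
    push_cast
    field_simp
    ring
  have h25 : (0:ℝ) ≤ x - 25 := by linarith
  have hden : (0:ℝ) < 120 * x^10 * (x-1) * (x+1)^4 := by
    apply mul_pos (mul_pos (by positivity) hx1) (by positivity)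
  have hpos : (0:ℝ) ≤ (2987623322776/7 + (2876275357619/21)*(x-25) + (134598762442/7)*(x-25)^2
        + (4627359607/3)*(x-25)^3 + (1623898456/21)*(x-25)^4 + (17367052/7)*(x-25)^5
        + (1044716/21)*(x-25)^6 + 570*(x-25)^7 + (20/7)*(x-25)^8)
        / (120 * x^10 * (x-1) * (x+1)^4) := by
    apply div_nonneg _ hden.le
    have p2 := pow_nonneg h25 2
    have p3 := pow_nonneg h25 3
    have p4 := pow_nonneg h25 4
    have p5 := pow_nonneg h25 5
    have p6 := pow_nonneg h25 6
    have p7 := pow_nonneg h25 7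
    have p8 := pow_nonneg h25 8
    linarith
  linarith [hlog, key, hpos]

lemma step_lo {x : ℝ} (hx : 25 ≤ x) :
    Bf x - Bf (x+1) ≤ Real.log (1 + 1/x) - 1/(x+1) := by
  have hx0 : (0:ℝ) < x := by linarith
  have hx1 : (0:ℝ) < x - 1 := by linarith
  have hx2 : (0:ℝ) < x + 1 := by linarith
  have habs : |(-(1/x))| = 1/x := by
    rw [abs_neg, abs_of_pos (by positivity)]
  have h := Real.abs_log_sub_add_sum_range_le (x := -(1/x))
    (by rw [habs, div_lt_one hx0]; linarith) 10
  rw [habs, abs_le, show (1 : ℝ) - -(1/x) = 1 + 1/x by ring] at h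
  have hlog : -(∑ i ∈ range 10, (-(1/x)) ^ (i+1) / (i+1)) - (1/x)^11/(1-1/x)
      ≤ Real.log (1 + 1/x) := by
    linarith [h.1]
  have hinv : (1:ℝ) - 1/x ≠ 0 := by
    have : 1/x < 1 := by rw [div_lt_one hx0]; linarith
    linarith
  have key : -(∑ i ∈ range 10, (-(1/x)) ^ (i+1) / (i+1)) - (1/x)^11/(1-1/x)
      - 1/(x+1) - (Bf x - Bf (x+1))
      = (506622794993600/7 + (582314606719000/21)*(x-25) + (100510663242700/21)*(x-25)^2
        + 490558216425*(x-25)^3 + (694935863998/21)*(x-25)^4 + (32266129615/21)*(x-25)^5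
        + (348345544/7)*(x-25)^6 + (23328040/21)*(x-25)^7 + (343660/21)*(x-25)^8
        + (1006/7)*(x-25)^9 + (4/7)*(x-25)^10)
        / (3000 * x^10 * (x-1) * (x+1)^6) := by
    simp only [Finset.sum_range_succ, Finset.sum_range_zero, Bf, Af]
    push_cast
    field_simp
    ring
  have h25 : (0:ℝ) ≤ x - 25 := by linarith
  have hden : (0:ℝ) < 3000 * x^10 * (x-1) * (x+1)^6 := by
    apply mul_pos (mul_pos (by positivity) hx1) (by positivity)
  have hpos : (0:ℝ) ≤ (506622794993600/7 + (582314606719000/21)*(x-25) + (100510663242700/21)*(x-25)^2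
        + 490558216425*(x-25)^3 + (694935863998/21)*(x-25)^4 + (32266129615/21)*(x-25)^5
        + (348345544/7)*(x-25)^6 + (23328040/21)*(x-25)^7 + (343660/21)*(x-25)^8
        + (1006/7)*(x-25)^9 + (4/7)*(x-25)^10)
        / (3000 * x^10 * (x-1) * (x+1)^6) := by
    apply div_nonneg _ hden.le
    have p2 := pow_nonneg h25 2
    have p3 := pow_nonneg h25 3
    have p4 := pow_nonneg h25 4
    have p5 := pow_nonneg h25 5
    have p6 := pow_nonneg h25 6
    have p7 := pow_nonneg h25 7
    have p8 := pow_nonneg h25 8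
    have p9 := pow_nonneg h25 9
    have p10 := pow_nonneg h25 10
    linarith
  linarith [hlog, key, hpos]






lemma seq_diff {k : ℕ} (hk : 1 ≤ k) :
    eulerMascheroniSeq' (k+1) = eulerMascheroniSeq' k - (Real.log (1 + 1/(k:ℝ)) - 1/((k:ℝ)+1)) := by
  have hk0 : k ≠ 0 := by omega
  have hkpos : (0:ℝ) < (k:ℝ) := by exact_mod_cast Nat.pos_of_ne_zero hk0
  simp only [eulerMascheroniSeq', hk0, Nat.succ_ne_zero, if_false, Nat.add_eq_zero, and_false]
  rw [harmonic_succ]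
  have hlog : Real.log ((k:ℝ)+1) = Real.log (k:ℝ) + Real.log (1 + 1/(k:ℝ)) := by
    rw [← Real.log_mul (by positivity) (by positivity)]
    congr 1
    field_simp
  push_cast
  rw [hlog]
  ring

lemma tele (m : ℕ) (hm : 25 ≤ m) :
    eulerMascheroniSeq' 25 - Af 25 ≤ eulerMascheroniSeq' m - Af m ∧
    eulerMascheroniSeq' m - Bf m ≤ eulerMascheroniSeq' 25 - Bf 25 := by
  induction m, hm using Nat.le_induction with
  | base => exact ⟨le_refl _, le_refl _⟩
  | succ k hk ih =>
    have hx : (25:ℝ) ≤ (k:ℝ) := by exact_mod_cast hk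
    have h1 := step_up hx
    have h2 := step_lo hx
    have hd := seq_diff (show 1 ≤ k by omega)
    have hc : ((k+1 : ℕ) : ℝ) = (k:ℝ)+1 := by push_cast; ring
    refine ⟨le_trans ih.1 ?_, le_trans ?_ ih.2⟩
    · rw [hd, hc]; linarith
    · rw [hd, hc]; linarith

lemma Af_nonneg (m : ℕ) : 0 ≤ Af m := by
  rcases Nat.eq_zero_or_pos m with rfl | hm
  · simp [Af]
  · have hy : (1:ℝ) ≤ (m:ℝ) := by exact_mod_cast hm
    have hy0 : (0:ℝ) < (m:ℝ) := by linarith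
    have key : Af (m:ℝ) = (60*(m:ℝ)^3 - 10*(m:ℝ)^2 + 1)/(120*(m:ℝ)^4) := by
      rw [Af]; field_simp; ring
    rw [key]
    apply div_nonneg _ (by positivity)
    nlinarith [one_le_pow₀ hy (n := 3), one_le_pow₀ hy (n := 2), pow_le_pow_right₀ hy (show 2 ≤ 3 by norm_num)]

lemma Bf_nonneg (m : ℕ) : 0 ≤ Bf m := by
  rcases Nat.eq_zero_or_pos m with rfl | hm
  · simp [Bf, Af]
  · have hy : (1:ℝ) ≤ (m:ℝ) := by exact_mod_cast hm
    have hy0 : (0:ℝ) < (m:ℝ) := by linarith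
    have key : Bf (m:ℝ) = (1500*(m:ℝ)^5 - 250*(m:ℝ)^4 + 25*(m:ℝ)^2 - 12)/(3000*(m:ℝ)^6) := by
      rw [Bf, Af]; field_simp; ring
    rw [key]
    apply div_nonneg _ (by positivity)
    nlinarith [pow_le_pow_right₀ hy (show 4 ≤ 5 by norm_num), one_le_pow₀ hy (n := 4),
      one_le_pow₀ hy (n := 2)]

lemma Af_le (m : ℕ) (hm : 1 ≤ m) : Af m ≤ 1/(m:ℝ) := by
  have hy : (1:ℝ) ≤ (m:ℝ) := by exact_mod_cast hm
  have hy0 : (0:ℝ) < (m:ℝ) := by linarith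
  have key : 1/(m:ℝ) - Af (m:ℝ) = (60*(m:ℝ)^3 + 10*(m:ℝ)^2 - 1)/(120*(m:ℝ)^4) := by
    rw [Af]; field_simp; ring
  have h2 : (0:ℝ) ≤ (60*(m:ℝ)^3 + 10*(m:ℝ)^2 - 1)/(120*(m:ℝ)^4) :=
    div_nonneg (by nlinarith [one_le_pow₀ hy (n := 3)]) (by positivity)
  linarith

lemma Bf_le (m : ℕ) (hm : 1 ≤ m) : Bf m ≤ 1/(m:ℝ) := by
  have h1 : (0:ℝ) < (m:ℝ)^6 := by
    have : (0:ℝ) < (m:ℝ) := by exact_mod_cast hm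
    positivity
  have := Af_le m hm
  have h2 : (0:ℝ) < 1/(250*(m:ℝ)^6) := by positivity
  rw [Bf]; linarith

lemma tendsto_Af : Tendsto (fun m : ℕ => Af m) atTop (𝓝 0) := by
  apply squeeze_zero' (g := fun m : ℕ => 1/(m:ℝ))
  · filter_upwards with m using Af_nonneg m
  · filter_upwards [eventually_ge_atTop 1] with m hm using Af_le m hm
  · exact tendsto_one_div_atTop_nhds_zero_nat

lemma tendsto_Bf : Tendsto (fun m : ℕ => Bf m) atTop (𝓝 0) := by
  apply squeeze_zero' (g := fun m : ℕ => 1/(m:ℝ))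
  · filter_upwards with m using Bf_nonneg m
  · filter_upwards [eventually_ge_atTop 1] with m hm using Bf_le m hm
  · exact tendsto_one_div_atTop_nhds_zero_nat

lemma gamma_ge : eulerMascheroniSeq' 25 - Af 25 ≤ eulerMascheroniConstant := by
  have hlim : Tendsto (fun m : ℕ => eulerMascheroniSeq' m - Af m) atTop
      (𝓝 (eulerMascheroniConstant - 0)) := tendsto_eulerMascheroniSeq'.sub tendsto_Af
  rw [sub_zero] at hlim
  refine ge_of_tendsto hlim ?_
  filter_upwards [eventually_ge_atTop 25] with m hm using (tele m hm).1

lemma gamma_le : eulerMascheroniConstant ≤ eulerMascheroniSeq' 25 - Bf 25 := by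
  have hlim : Tendsto (fun m : ℕ => eulerMascheroniSeq' m - Bf m) atTop
      (𝓝 (eulerMascheroniConstant - 0)) := tendsto_eulerMascheroniSeq'.sub tendsto_Bf
  rw [sub_zero] at hlim
  refine le_of_tendsto hlim ?_
  filter_upwards [eventually_ge_atTop 25] with m hm using (tele m hm).2

lemma seq25 : eulerMascheroniSeq' 25 = ((34052522467/8923714800 : ℚ) : ℝ) - Real.log 25 := by
  have h3 : (harmonic 25 : ℚ) = 34052522467/8923714800 := by
    norm_num [harmonic_succ, harmonic_zero]
  simp only [eulerMascheroniSeq', if_false, show (25:ℕ) ≠ 0 by norm_num]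
  rw [h3]
  norm_num

lemma gamma_gt : (0.577215664884774 : ℝ) < eulerMascheroniConstant := by
  have h1 := gamma_ge
  rw [seq25] at h1
  have h2 : Af 25 = 1/50 - 1/7500 + 1/46875000 := by rw [Af]; norm_num
  rw [h2] at h1
  have h4 := log_25_lt
  push_cast at h1
  linarith

lemma gamma_lt : eulerMascheroniConstant < 0.577215664902186 := by
  have h1 := gamma_le
  rw [seq25] at h1
  have h2 : Bf 25 = 1/50 - 1/7500 + 1/46875000 - 1/61035156250 := by rw [Bf, Af]; norm_num
  rw [h2] at h1
  have h4 := log_25_gt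
  push_cast at h1
  linarith


end DiscrAux

open Real NumberField Module
open DiscrAux

/-- **Key step of Theorem 2.** For a number field `K` of degree `n ≤ 3` over `ℚ`,
`log |d_K| ≠ r₁(K)·π/2 + n·(log (8π) + γ)`. -/
theorem log_abs_discr_ne_of_degree_le_three (K : Type*) [Field K] [NumberField K]
    (h : Module.finrank ℚ K ≤ 3) :
    Real.log |(NumberField.discr K : ℝ)| ≠
      (NumberField.InfinitePlace.nrRealPlaces K : ℝ) * (Real.pi / 2) +
        (Module.finrank ℚ K : ℝ) *
          (Real.log (8 * Real.pi) + Real.eulerMascheroniConstant) := by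
  intro heq
  have hd : NumberField.discr K ≠ 0 := NumberField.discr_ne_zero K
  have hd1 : (1:ℤ) ≤ |NumberField.discr K| := Int.one_le_abs hd
  have habs : |((NumberField.discr K : ℤ) : ℝ)| = ((|NumberField.discr K| : ℤ) : ℝ) :=
    (Int.cast_abs (a := NumberField.discr K)).symm
  have hpos : (0:ℝ) < |((NumberField.discr K : ℤ) : ℝ)| := by
    rw [habs]; exact_mod_cast lt_of_lt_of_le zero_lt_one hd1
  have hrk := NumberField.InfinitePlace.card_add_two_mul_card_eq_rank K
  have hn1 : 1 ≤ Module.finrank ℚ K := Module.finrank_pos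
  have h8 : Real.log (8 * Real.pi) = 3 * Real.log 2 + Real.log Real.pi := by
    rw [Real.log_mul (by norm_num) (by positivity), show (8:ℝ) = 2^3 by norm_num,
      Real.log_pow]
    norm_num
  have hpi1 := Real.pi_gt_d20
  have hpi2 := Real.pi_lt_d20
  have hlpi1 : (1.144729885845982:ℝ) < Real.log Real.pi :=
    lt_trans log_q1_gt (Real.log_lt_log (by norm_num) (by norm_num; linarith))
  have hlpi2 : Real.log Real.pi < 1.144729885849792 :=
    lt_trans (Real.log_lt_log (by positivity) (by norm_num; linarith)) log_q2_lt
  have hl2a := log_two_gt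
  have hl2b := log_two_lt
  have hg1 := gamma_gt
  have hg2 := gamma_lt
  rw [h8] at heq
  have key : ∀ M : ℤ, 0 < M →
      Real.log M < Real.log |((NumberField.discr K : ℤ) : ℝ)| →
      Real.log |((NumberField.discr K : ℤ) : ℝ)| < Real.log (M+1) → False := by
    intro M hM h1 h2
    have hMR : (0:ℝ) < (M:ℝ) := by exact_mod_cast hM
    have k1 : (M:ℝ) < |((NumberField.discr K : ℤ) : ℝ)| :=
      (Real.log_lt_log_iff hMR hpos).mp h1
    have h2' : Real.log |((NumberField.discr K : ℤ) : ℝ)| < Real.log ((M:ℝ)+1) := by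
      push_cast at h2 ⊢; exact h2
    have k2 : |((NumberField.discr K : ℤ) : ℝ)| < (M:ℝ)+1 :=
      (Real.log_lt_log_iff hpos (by linarith)).mp h2'
    rw [habs] at k1 k2
    have k3 : (M:ℤ) < |NumberField.discr K| := by exact_mod_cast k1
    have k4 : |NumberField.discr K| < M + 1 := by exact_mod_cast k2
    omega
  have hr3 : NumberField.InfinitePlace.nrRealPlaces K ≤ 3 := by omega
  set n := Module.finrank ℚ K with hn
  set r := NumberField.InfinitePlace.nrRealPlaces K with hr
  have hrn : r ≤ n := by omega
  clear_value n r
  interval_cases n <;> interval_cases r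
  · omega
  · push_cast at heq
    refine key 215 (by norm_num) ?_ ?_
    · rw [heq]; push_cast; norm_num
      linarith [log_215_lt]
    · rw [heq]; push_cast; norm_num
      linarith [log_216_gt]
  · push_cast at heq
    refine key 2003 (by norm_num) ?_ ?_
    · rw [heq]; push_cast; norm_num
      linarith [log_2003_lt]
    · rw [heq]; push_cast; norm_num
      linarith [log_2004_gt]
  · omega
  · push_cast at heq
    refine key 46368 (by norm_num) ?_ ?_
    · rw [heq]; push_cast; norm_num
      linarith [log_46368_lt]
    · rw [heq]; push_cast; norm_num
      linarith [log_46369_gt]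
  · omega
  · push_cast at heq
    refine key 431471 (by norm_num) ?_ ?_
    · rw [heq]; push_cast; norm_num
      linarith [log_431471_lt]
    · rw [heq]; push_cast; norm_num
      linarith [log_431472_gt]
  · omega
  · push_cast at heq
    refine key 9984558 (by norm_num) ?_ ?_
    · rw [heq]; push_cast; norm_num
      linarith [log_9984558_lt]
    · rw [heq]; push_cast; norm_num
      linarith [log_9984559_gt]
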